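/- Let φ̂_k(x) = T_k(x) − T_{k+2}(x) and φ̃_k(x) = T_k(x) − (2(k+2)/(k+3)) T_{k+2}(x) + ((k+1)/(k+3)) T_{k+4}(x). For all j, k ∈ ℕ the first-derivative matrix entries Ĉ_{kj} = ⟨φ̃_j', φ̂_k⟩_σ satisfy: Ĉ_{kj} = π(k−2)(k+1)/k if j = k−3 (so k ≥ 3); Ĉ_{kj} = −2π(k+1)²/(k+2) if j = k−1; Ĉ_{k,k+1} = π(k+1); and Ĉ_{kj} = 0 otherwise. -/

import Mathlib

/-!
Since `T_m' = m U_{m-1}` and `U_{k+2} = U_k + 2 T_{k+2}`, orthogonality of the `T_n` gives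
`⟨T_m', T_n⟩_σ = mπ` when `n < m` and `m + n` is odd, and `0` otherwise. Taking the difference
for `n = k` and `n = k + 2` leaves `⟨T_m', φ̂_k⟩_σ = (k+1)π δ_{m,k+1}`, so of the three terms of
`φ̃_j` only the one containing `T_{k+1}` contributes to `Ĉ_{kj}`.
-/

open Real Polynomial

/-- The k-th Chebyshev polynomial of the first kind, as a real polynomial. -/
noncomputable def chebT (n : ℕ) : Polynomial ℝ := Polynomial.Chebyshev.T ℝ (n : ℤ)

/-- The Chebyshev-weighted inner product `⟨f,g⟩_σ = ∫_{-1}^{1} f g (1-x²)^{-1/2} dx`. -/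
noncomputable def chebInner (f g : Polynomial ℝ) : ℝ :=
  ∫ x in (-1:ℝ)..1, f.eval x * g.eval x / Real.sqrt (1 - x ^ 2)

/-- Shen's Dirichlet basis function `φ̂_k = T_k − T_{k+2}`. -/
noncomputable def shenD (k : ℕ) : Polynomial ℝ := chebT k - chebT (k + 2)

/-- Shen's biharmonic basis function
`φ̃_k = T_k − (2(k+2)/(k+3)) T_{k+2} + ((k+1)/(k+3)) T_{k+4}`. -/
noncomputable def shenB (k : ℕ) : Polynomial ℝ :=
  chebT k - Polynomial.C ((2 * ((k : ℝ) + 2)) / ((k : ℝ) + 3)) * chebT (k + 2)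
    + Polynomial.C (((k : ℝ) + 1) / ((k : ℝ) + 3)) * chebT (k + 4)

open MeasureTheory

lemma chebInner_eq_integral_measureT (f g : ℝ[X]) :
    chebInner f g = ∫ x, f.eval x * g.eval x ∂Chebyshev.measureT := by
  simp only [chebInner, Chebyshev.integral_measureT, Real.sqrt_inv, div_eq_mul_inv]

lemma integrable_eval_mul_eval_measureT (f g : ℝ[X]) :
    Integrable (fun x => f.eval x * g.eval x) Chebyshev.measureT :=
  Chebyshev.integrable_measureT (by fun_prop)

lemma chebInner_comm (f g : ℝ[X]) : chebInner f g = chebInner g f := by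
  simp only [chebInner, mul_comm (f.eval _)]

lemma chebInner_zero_left (g : ℝ[X]) : chebInner 0 g = 0 := by
  simp [chebInner]

lemma chebInner_add_left (f g h : ℝ[X]) :
    chebInner (f + g) h = chebInner f h + chebInner g h := by
  simp only [chebInner_eq_integral_measureT, eval_add, add_mul]
  exact integral_add (integrable_eval_mul_eval_measureT f h) (integrable_eval_mul_eval_measureT g h)

lemma chebInner_sub_left (f g h : ℝ[X]) :
    chebInner (f - g) h = chebInner f h - chebInner g h := by
  simp only [chebInner_eq_integral_measureT, eval_sub, sub_mul]
  exact integral_sub (integrable_eval_mul_eval_measureT f h) (integrable_eval_mul_eval_measureT g h)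

lemma chebInner_sub_right (f g h : ℝ[X]) :
    chebInner f (g - h) = chebInner f g - chebInner f h := by
  rw [chebInner_comm, chebInner_sub_left, chebInner_comm g, chebInner_comm h]

lemma chebInner_C_mul_left (c : ℝ) (f g : ℝ[X]) :
    chebInner (C c * f) g = c * chebInner f g := by
  simp only [chebInner_eq_integral_measureT, eval_mul, eval_C, mul_assoc]
  exact integral_const_mul c _

lemma chebInner_chebT_zero_chebT (n : ℕ) :
    chebInner (chebT 0) (chebT n) = if n = 0 then π else 0 := by
  rw [chebInner_eq_integral_measureT]
  split_ifs with hn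
  · subst hn
    exact Chebyshev.integral_eval_T_real_mul_self_measureT_zero
  · exact Chebyshev.integral_eval_T_real_mul_eval_T_real_measureT_of_ne (Ne.symm hn)

lemma chebInner_chebT_chebT_of_ne_zero {m : ℕ} (hm : m ≠ 0) (n : ℕ) :
    chebInner (chebT m) (chebT n) = if m = n then π / 2 else 0 := by
  rw [chebInner_eq_integral_measureT]
  split_ifs with h
  · subst h
    exact Chebyshev.integral_T_real_mul_self_measureT_of_ne_zero hm
  · exact Chebyshev.integral_eval_T_real_mul_eval_T_real_measureT_of_ne h

lemma chebInner_U_chebT (k n : ℕ) :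
    chebInner (Chebyshev.U ℝ k) (chebT n) = if n ≤ k ∧ (k + n) % 2 = 0 then π else 0 := by
  induction k using Nat.twoStepInduction with
  | zero =>
    rw [show Chebyshev.U ℝ ((0 : ℕ) : ℤ) = chebT 0 by simp [chebT], chebInner_chebT_zero_chebT]
    split_ifs <;> first | omega | rfl
  | one =>
    rw [show Chebyshev.U ℝ ((1 : ℕ) : ℤ) = C 2 * chebT 1 by simp [chebT, C_ofNat],
      chebInner_C_mul_left, chebInner_chebT_chebT_of_ne_zero one_ne_zero]
    split_ifs <;> first | omega | ring
  | more k ih _ =>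
    have hU : Chebyshev.U ℝ ((k + 2 : ℕ) : ℤ) = C 2 * chebT (k + 2) + Chebyshev.U ℝ k := by
      rw [chebT, C_ofNat]
      push_cast
      exact Chebyshev.U_eq_two_mul_T_add_U ℝ k
    rw [hU, chebInner_add_left, chebInner_C_mul_left, ih,
      chebInner_chebT_chebT_of_ne_zero (Nat.succ_ne_zero _)]
    split_ifs <;> first | omega | ring

lemma derivative_chebT_succ (k : ℕ) :
    derivative (chebT (k + 1)) = C ((k : ℝ) + 1) * Chebyshev.U ℝ k := by
  simp [chebT, Chebyshev.T_derivative_eq_U]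

lemma chebInner_derivative_chebT_chebT (m n : ℕ) :
    chebInner (derivative (chebT m)) (chebT n) =
      if n < m ∧ (m + n) % 2 = 1 then m * π else 0 := by
  cases m with
  | zero => simp [chebT, chebInner_zero_left]
  | succ k =>
    rw [derivative_chebT_succ, chebInner_C_mul_left, chebInner_U_chebT]
    push_cast
    split_ifs <;> first | omega | ring

lemma chebInner_derivative_chebT_shenD (m k : ℕ) :
    chebInner (derivative (chebT m)) (shenD k) = if m = k + 1 then m * π else 0 := by
  rw [shenD, chebInner_sub_right, chebInner_derivative_chebT_chebT,
    chebInner_derivative_chebT_chebT]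
  split_ifs <;> first | omega | ring

lemma chebInner_derivative_shenB (j : ℕ) (g : ℝ[X]) :
    chebInner (derivative (shenB j)) g =
      chebInner (derivative (chebT j)) g
        - 2 * ((j : ℝ) + 2) / ((j : ℝ) + 3) * chebInner (derivative (chebT (j + 2))) g
        + ((j : ℝ) + 1) / ((j : ℝ) + 3) * chebInner (derivative (chebT (j + 4))) g := by
  rw [shenB, derivative_add, derivative_sub, derivative_C_mul, derivative_C_mul,
    chebInner_add_left, chebInner_sub_left, chebInner_C_mul_left, chebInner_C_mul_left]

/-- The first-derivative matrix `Ĉ_{kj} = ⟨φ̃_j', φ̂_k⟩_σ`: it is zero except on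
the diagonals `j = k−3, k−1, k+1` where `Ĉ_{k,k−3} = π(k−2)(k+1)/k` (for `k ≥ 3`),
`Ĉ_{k,k−1} = −2π(k+1)²/(k+2)` and `Ĉ_{k,k+1} = π(k+1)`. -/
theorem shen_first_derivative_matrix_BD :
    -- j = k − 3 (stated with row index k+3): Ĉ_{k+3,k} = π(k+1)(k+4)/(k+3)
    (∀ k : ℕ, chebInner (Polynomial.derivative (shenB k)) (shenD (k + 3)) =
      Real.pi * (((k : ℝ) + 3) - 2) * (((k : ℝ) + 3) + 1) / ((k : ℝ) + 3)) ∧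
    -- j = k − 1 (stated with row index k+1): Ĉ_{k+1,k} = −2π((k+1)+1)²/((k+1)+2)
    (∀ k : ℕ, chebInner (Polynomial.derivative (shenB k)) (shenD (k + 1)) =
      -2 * Real.pi * (((k : ℝ) + 1) + 1) ^ 2 / (((k : ℝ) + 1) + 2)) ∧
    -- j = k + 1: Ĉ_{k,k+1} = π(k+1)
    (∀ k : ℕ, chebInner (Polynomial.derivative (shenB (k + 1))) (shenD k) =
      Real.pi * ((k : ℝ) + 1)) ∧
    -- otherwise zero
    (∀ j k : ℕ, k ≠ j + 3 → k ≠ j + 1 → j ≠ k + 1 →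
      chebInner (Polynomial.derivative (shenB j)) (shenD k) = 0) := by
  refine ⟨fun k => ?_, fun k => ?_, fun k => ?_, fun j k h₁ h₂ h₃ => ?_⟩ <;>
    simp only [chebInner_derivative_shenB, chebInner_derivative_chebT_shenD] <;>
    split_ifs <;> first | omega | (push_cast; field_simp; ring)
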